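/- Let h : S → S' be uniformly continuous and suppose C' := h(C) is closed in S'. Set O' = S' \ C'. If μ_n → μ in M_O, then the pushforward measures of μ_n and μ under h, restricted to O', belong to M_{O'} and converge in M_{O'}; equivalently, ∫_O (f' ∘ h) dμ_n → ∫_O (f' ∘ h) dμ for every f' ∈ C_{O'} (with f' extended by 0 to S'). -/
import Mathlib


open MeasureTheory Metric Filter Topology Set

noncomputable section

variable {S : Type*} [MetricSpace S] [MeasurableSpace S]

/-- `A` is bounded away from `C`: `A ⊆ S \ C^r` for some `r > 0`. -/
def BddAway (C A : Set S) : Prop := ∃ r > 0, ∀ x ∈ A, r ≤ infDist x C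

/-- The class `C_O` of test functions: bounded, nonnegative, continuous on `O = S \ C`,
and vanishing on `C^r` for some `r > 0` (extended by `0` to all of `S`). -/
def IsCO (C : Set S) (f : S → ℝ) : Prop :=
  ContinuousOn f Cᶜ ∧ (∀ x, 0 ≤ f x) ∧ (∃ B : ℝ, ∀ x, f x ≤ B) ∧
    ∃ r > 0, ∀ x, infDist x C < r → f x = 0

/-- The class `M_O`: Borel measures on `O = S \ C` (i.e. giving no mass to `C`)
that are finite on `S \ C^r` for each `r > 0`. -/
def MemMO (C : Set S) (μ : Measure S) : Prop :=
  μ C = 0 ∧ ∀ r : ℝ, 0 < r → μ {x | r ≤ infDist x C} < ⊤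

/-- Convergence `μ_n → μ` in `M_O`. -/
def MOTendsto (C : Set S) (μn : ℕ → Measure S) (μ : Measure S) : Prop :=
  ∀ f : S → ℝ, IsCO C f →
    Tendsto (fun n => ∫ x, f x ∂ μn n) atTop (𝓝 (∫ x, f x ∂ μ))

/-- A test function in `C_O` is continuous on all of `S` (it vanishes on an open
neighborhood of `C` and is continuous off `C`). -/
lemma IsCO.continuous {C : Set S} (hCc : IsClosed C) {f : S → ℝ} (hf : IsCO C f) : Continuous f := by
  obtain ⟨hcont, _, _, r, hr, hvan⟩ := hf
  rw [continuous_iff_continuousAt]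
  intro y
  by_cases hy : infDist y C < r
  · have hU : IsOpen {x : S | infDist x C < r} :=
      isOpen_lt (continuous_infDist_pt C) continuous_const
    have hev : (fun _ : S => (0 : ℝ)) =ᶠ[𝓝 y] f :=
      Filter.eventually_of_mem (hU.mem_nhds hy) (fun x hx => (hvan x hx).symm)
    exact continuousAt_const.congr hev
  · have hyc : y ∈ Cᶜ := by
      intro hyC
      exact hy (by simpa [infDist_zero_of_mem hyC] using hr)
    exact hcont.continuousAt (hCc.isOpen_compl.mem_nhds hyc)

/-- Mapping corollary: if `h : S → S'` is uniformly continuous and `C' = h(C)` is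
closed, then `μ_n → μ` in `M_O` implies that the pushforwards, restricted to
`O' = S' \ C'`, lie in `M_{O'}` and converge in `M_{O'}`; equivalently
`∫ (f' ∘ h) dμ_n → ∫ (f' ∘ h) dμ` for every `f' ∈ C_{O'}`. -/
theorem stmt6 [BorelSpace S] {S' : Type*} [MetricSpace S'] [MeasurableSpace S'] [BorelSpace S']
    [CompleteSpace S] [TopologicalSpace.SeparableSpace S]
    [CompleteSpace S'] [TopologicalSpace.SeparableSpace S']
    (C : Set S) (hC : IsClosed C)
    (μ : Measure S) (μn : ℕ → Measure S)
    (hμ : MemMO C μ) (hμn : ∀ n, MemMO C (μn n))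
    (h : S → S') (hu : UniformContinuous h) (hC' : IsClosed (h '' C))
    (hconv : MOTendsto C μn μ) :
    MemMO (h '' C) ((Measure.map h μ).restrict (h '' C)ᶜ) ∧
    (∀ n, MemMO (h '' C) ((Measure.map h (μn n)).restrict (h '' C)ᶜ)) ∧
    MOTendsto (h '' C) (fun n => (Measure.map h (μn n)).restrict (h '' C)ᶜ)
      ((Measure.map h μ).restrict (h '' C)ᶜ) ∧
    ∀ f' : S' → ℝ, IsCO (h '' C) f' →
      Tendsto (fun n => ∫ x, f' (h x) ∂ μn n) atTop (𝓝 (∫ x, f' (h x) ∂ μ)) := by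
  set C' : Set S' := h '' C with hC'def
  have hmeas : Measurable h := hu.continuous.measurable
  -- uniform continuity transfer
  have key : ∀ ε : ℝ, 0 < ε → ∃ δ > 0, ∀ x : S, infDist x C < δ →
      infDist (h x) C' < ε := by
    intro ε hε
    rcases Metric.uniformContinuous_iff.mp hu ε hε with ⟨δ, hδ, hδ'⟩
    refine ⟨δ, hδ, fun x hx => ?_⟩
    rcases Set.eq_empty_or_nonempty C with hCe | hCn
    · simp [hC'def, hCe, infDist_empty, hε]
    · rcases (Metric.infDist_lt_iff hCn).mp hx with ⟨c, hcC, hcd⟩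
      calc infDist (h x) C' ≤ dist (h x) (h c) :=
            infDist_le_dist_of_mem ⟨c, hcC, rfl⟩
        _ < ε := hδ' hcd
  -- contrapositive form
  have key' : ∀ r : ℝ, 0 < r → ∃ δ > 0,
      {x : S | r ≤ infDist (h x) C'} ⊆ {x : S | δ ≤ infDist x C} := by
    intro r hr
    rcases key r hr with ⟨δ, hδ, hδ'⟩
    refine ⟨δ, hδ, fun x hx => ?_⟩
    by_contra hle
    exact absurd (hδ' x (lt_of_not_ge hle)) (not_lt.mpr hx)
  have hAmeas : ∀ r : ℝ, MeasurableSet {y : S' | r ≤ infDist y C'} :=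
    fun r => (isClosed_le continuous_const (continuous_infDist_pt C')).measurableSet
  -- membership in M_{O'}
  have hmem : ∀ ν : Measure S, MemMO C ν →
      MemMO C' ((Measure.map h ν).restrict C'ᶜ) := by
    intro ν hν
    constructor
    · rw [Measure.restrict_apply hC'.measurableSet]
      simp
    · intro r hr
      rcases key' r hr with ⟨δ, hδ, hsub⟩
      calc ((Measure.map h ν).restrict C'ᶜ) {y | r ≤ infDist y C'}
          ≤ (Measure.map h ν) {y | r ≤ infDist y C'} :=
            Measure.restrict_le_self _
        _ = ν (h ⁻¹' {y | r ≤ infDist y C'}) :=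
            Measure.map_apply hmeas (hAmeas r)
        _ ≤ ν {x | δ ≤ infDist x C} := measure_mono hsub
        _ < ⊤ := hν.2 δ hδ
  -- integral identity
  have hint : ∀ (ν : Measure S) (f' : S' → ℝ), IsCO C' f' →
      ∫ y, f' y ∂ ((Measure.map h ν).restrict C'ᶜ) = ∫ x, f' (h x) ∂ ν := by
    intro ν f' hf'
    have hfc : Continuous f' := hf'.continuous hC'
    obtain ⟨-, -, -, r, hr, hvan⟩ := hf'
    have h1 : ∫ y in C'ᶜ, f' y ∂ (Measure.map h ν) = ∫ y, f' y ∂ (Measure.map h ν) :=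
      setIntegral_eq_integral_of_forall_compl_eq_zero (fun y hy => by
        have : y ∈ C' := not_not.mp hy
        exact hvan y (by simpa [infDist_zero_of_mem this] using hr))
    rw [h1, integral_map hmeas.aemeasurable hfc.aestronglyMeasurable]
  -- composed test function
  have hcomp : ∀ f' : S' → ℝ, IsCO C' f' → IsCO C (fun x => f' (h x)) := by
    intro f' hf'
    have hfc : Continuous f' := hf'.continuous hC'
    obtain ⟨-, hnn, ⟨B, hB⟩, r, hr, hvan⟩ := hf'
    rcases key r hr with ⟨δ, hδ, hδ'⟩
    exact ⟨(hfc.comp hu.continuous).continuousOn, fun x => hnn (h x), ⟨B, fun x => hB (h x)⟩,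
      δ, hδ, fun x hx => hvan (h x) (hδ' x hx)⟩
  refine ⟨hmem μ hμ, fun n => hmem (μn n) (hμn n), ?_, ?_⟩
  · intro f' hf'
    have := hconv _ (hcomp f' hf')
    simpa [hint μ f' hf', fun n => hint (μn n) f' hf'] using this
  · intro f' hf'
    exact hconv _ (hcomp f' hf')
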